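/- arXiv:2301.12195 — 3 statements merged into one kernel-verified Lean document; each statement's English description precedes it below -/
import Mathlib

section
/- Multivariate Stein's identity: let n ∈ ℕ, σ > 0, and let μ_σ be the product measure on EuclideanSpace ℝ (Fin n) each of whose n coordinates is independently distributed as the Gaussian measure N(0, σ²). If g : EuclideanSpace ℝ (Fin n) → ℝ is continuously differentiable, the maps δ ↦ δ·g(δ) (vector-valued) and δ ↦ ∇g(δ) are integrable against μ_σ, and g has at most polynomial growth, then ∫ δ·g(δ) dμ_σ(δ) = σ² · ∫ ∇g(δ) dμ_σ(δ), where both sides are vectors in EuclideanSpace ℝ (Fin n) and ∇g denotes the gradient of g. -/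
/-!
Coordinatewise, the identity reduces by Fubini, splitting off the `i`-th coordinate, to the
one-dimensional Stein identity on almost every line parallel to `eᵢ`. In dimension one, the
`N(0, v)` density satisfies `φ' = -(x / v) φ`, so `(φ f)' = φ f' - x φ f / v`. The integral of
this derivative over `ℝ` vanishes because `φ f` is Lebesgue integrable, which follows from the
continuity of `f` together with the integrability of `x f(x)` against `N(0, v)`.
-/

open MeasureTheory ProbabilityTheory

/-- The law of an `n`-dimensional Gaussian vector with mean `0` and covariance `σ² I`,
realized as the product over `Fin n` of `gaussianReal 0 σ²`, viewed as a measure on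
`EuclideanSpace ℝ (Fin n)`. -/
noncomputable def gaussPi (n : ℕ) (σ : ℝ) : Measure (EuclideanSpace ℝ (Fin n)) :=
  (Measure.pi fun _ : Fin n => gaussianReal 0 ⟨σ ^ 2, sq_nonneg σ⟩).map
    (MeasurableEquiv.toLp 2 (Fin n → ℝ))

open Real Filter
open scoped NNReal

lemma integrable_gaussianReal_iff {E : Type*} [NormedAddCommGroup E] [NormedSpace ℝ E] {μ : ℝ}
    {v : ℝ≥0} (hv : v ≠ 0) {f : ℝ → E} :
    Integrable f (gaussianReal μ v) ↔ Integrable (fun x => gaussianPDFReal μ v x • f x) := by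
  rw [gaussianReal_of_var_ne_zero _ hv, integrable_withDensity_iff_integrable_smul'
    (measurable_gaussianPDF _ _) (ae_of_all _ fun _ => gaussianPDF_lt_top)]
  simp [toReal_gaussianPDF]

lemma hasDerivAt_gaussianPDFReal (μ : ℝ) (v : ℝ≥0) (x : ℝ) :
    HasDerivAt (gaussianPDFReal μ v) (-((x - μ) / v) * gaussianPDFReal μ v x) x := by
  have h := ((((hasDerivAt_id x).sub_const μ).pow 2).neg.div_const (2 * (v : ℝ))).exp.const_mul
    (√(2 * π * v))⁻¹
  refine (h.congr_deriv ?_).congr_of_eventuallyEq (Eventually.of_forall fun y => ?_)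
  · simp only [gaussianPDFReal, id, Pi.pow_apply, Pi.neg_apply]; ring
  · simp [gaussianPDFReal]

lemma Continuous.integrable_of_integrable_id_mul {μ : Measure ℝ} [IsFiniteMeasure μ] {f : ℝ → ℝ}
    (hf : Continuous f) (hxf : Integrable (fun x => x * f x) μ) : Integrable f μ := by
  obtain ⟨M, hM⟩ := (isCompact_Icc (a := (-1 : ℝ)) (b := 1)).exists_bound_of_continuousOn
    hf.continuousOn
  refine (hxf.norm.add (integrable_const M)).mono' hf.aestronglyMeasurable
    (ae_of_all _ fun x => show ‖f x‖ ≤ ‖x * f x‖ + M from ?_)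
  have hM₀ : 0 ≤ M := (norm_nonneg _).trans (hM 0 (by norm_num))
  rcases le_or_gt |x| 1 with hx | hx
  · linarith [hM x (abs_le.mp hx), norm_nonneg (x * f x)]
  · have : ‖f x‖ ≤ ‖x * f x‖ := by
      rw [norm_mul]
      exact le_mul_of_one_le_left (norm_nonneg _) (by rw [Real.norm_eq_abs]; linarith)
    linarith

theorem integral_mul_gaussianReal_eq_var_mul_integral_deriv {v : ℝ≥0} {f f' : ℝ → ℝ}
    (hf : ∀ x, HasDerivAt f (f' x) x) (hxf : Integrable (fun x => x * f x) (gaussianReal 0 v))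
    (hf' : Integrable f' (gaussianReal 0 v)) :
    ∫ x, x * f x ∂gaussianReal 0 v = v * ∫ x, f' x ∂gaussianReal 0 v := by
  rcases eq_or_ne v 0 with rfl | hv
  · simp
  set φ := gaussianPDFReal 0 v
  have hφf : ∀ x, HasDerivAt (fun x => φ x * f x) (φ x * f' x - φ x * (x * f x) / v) x :=
    fun x => ((hasDerivAt_gaussianPDFReal 0 v x).mul (hf x)).congr_deriv (by ring)
  have hφf_int : Integrable (fun x => φ x * f x) := by
    have hf_cont : Continuous f := continuous_iff_continuousAt.2 fun x => (hf x).continuousAt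
    exact (integrable_gaussianReal_iff hv).1 (hf_cont.integrable_of_integrable_id_mul hxf)
  have hφxf_int : Integrable (fun x => φ x * (x * f x)) := (integrable_gaussianReal_iff hv).1 hxf
  have hφf'_int : Integrable (fun x => φ x * f' x) := (integrable_gaussianReal_iff hv).1 hf'
  have hvanish := integral_eq_zero_of_hasDerivAt_of_integrable hφf
    (hφf'_int.sub (hφxf_int.div_const _)) hφf_int
  rw [integral_sub hφf'_int (hφxf_int.div_const _), integral_div, sub_eq_zero,
    eq_div_iff (by exact_mod_cast hv)] at hvanish
  simp only [integral_gaussianReal_eq_integral_smul hv, smul_eq_mul]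
  rw [← hvanish]; ring

lemma gradient_apply_eq_fderiv_single {ι : Type*} [Fintype ι] [DecidableEq ι]
    (g : EuclideanSpace ℝ ι → ℝ) (x : EuclideanSpace ℝ ι) (i : ι) :
    gradient g x i = fderiv ℝ g x (EuclideanSpace.single i 1) := by
  rw [← inner_gradient_left, EuclideanSpace.inner_single_right]; simp

lemma measurePreserving_insertNth_gaussPi {m : ℕ} (σ : ℝ) (i : Fin (m + 1)) :
    MeasurePreserving
      ((MeasurableEquiv.piFinSuccAbove (fun _ => ℝ) i).symm.trans
        (MeasurableEquiv.toLp 2 (Fin (m + 1) → ℝ)))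
      ((gaussianReal 0 ⟨σ ^ 2, sq_nonneg σ⟩).prod
        (Measure.pi fun _ : Fin m => gaussianReal 0 ⟨σ ^ 2, sq_nonneg σ⟩))
      (gaussPi (m + 1) σ) :=
  ((MeasurableEquiv.toLp 2 _).measurable.measurePreserving _).comp
    (measurePreserving_piFinSuccAbove (fun _ => gaussianReal 0 _) i).symm

lemma hasDerivAt_toLp_insertNth {m : ℕ} (i : Fin (m + 1)) (z : Fin m → ℝ) (x : ℝ) :
    HasDerivAt (fun x => WithLp.toLp 2 (i.insertNth (α := fun _ => ℝ) x z))
      (EuclideanSpace.single i (1 : ℝ)) x := by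
  have hline : (fun x => WithLp.toLp 2 (i.insertNth (α := fun _ => ℝ) x z)) = fun x =>
      WithLp.toLp 2 (i.insertNth (α := fun _ => ℝ) 0 z) + x • EuclideanSpace.single i 1 := by
    funext x; ext j; cases j using Fin.succAboveCases i <;> simp
  rw [hline]
  simpa using ((hasDerivAt_id x).smul_const (EuclideanSpace.single i (1 : ℝ))).const_add
    (WithLp.toLp 2 (i.insertNth (α := fun _ => ℝ) 0 z))

lemma integral_euclideanSpace_apply {α ι : Type*} [MeasurableSpace α] [Fintype ι] {μ : Measure α}
    {f : α → EuclideanSpace ℝ ι} (hf : Integrable f μ) (i : ι) :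
    (∫ x, f x ∂μ) i = ∫ x, f x i ∂μ :=
  ((EuclideanSpace.proj i).integral_comp_comm hf).symm

theorem integral_coord_mul_gaussPi {n : ℕ} {σ : ℝ} {g : EuclideanSpace ℝ (Fin n) → ℝ}
    (hg : Differentiable ℝ g) (i : Fin n)
    (h₁ : Integrable (fun δ => δ i * g δ) (gaussPi n σ))
    (h₂ : Integrable (fun δ => fderiv ℝ g δ (EuclideanSpace.single i 1)) (gaussPi n σ)) :
    ∫ δ, δ i * g δ ∂gaussPi n σ =
      σ ^ 2 * ∫ δ, fderiv ℝ g δ (EuclideanSpace.single i 1) ∂gaussPi n σ := by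
  obtain ⟨m, rfl⟩ := Nat.exists_eq_add_one_of_ne_zero i.pos.ne'
  have he := measurePreserving_insertNth_gaussPi σ i
  -- Instance search does not see through the anonymous constructor that the product measure is
  -- σ-finite; naming the variance fixes this.
  set v : ℝ≥0 := ⟨σ ^ 2, sq_nonneg σ⟩
  rw [← he.integrable_comp_emb (MeasurableEquiv.measurableEmbedding _)] at h₁ h₂
  simp only [Function.comp_def] at h₁ h₂
  rw [← he.integral_comp', ← he.integral_comp', integral_prod_symm _ h₁, integral_prod_symm _ h₂,
    ← integral_const_mul]
  refine integral_congr_ae ?_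
  filter_upwards [h₁.prod_left_ae, h₂.prod_left_ae] with z hz₁ hz₂
  simp only [MeasurableEquiv.trans_apply, MeasurableEquiv.piFinSuccAbove_symm_apply,
    MeasurableEquiv.toLp_apply, Fin.insertNthEquiv_apply, Fin.insertNth_apply_same] at hz₁ hz₂ ⊢
  exact integral_mul_gaussianReal_eq_var_mul_integral_deriv
    (fun x => (hg _).hasFDerivAt.comp_hasDerivAt x (hasDerivAt_toLp_insertNth i z x)) hz₁ hz₂

theorem stein_identity_multivariate_general (n : ℕ) (σ : ℝ)
    (g : EuclideanSpace ℝ (Fin n) → ℝ) (hg : ContDiff ℝ 1 g)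
    (hint₁ : Integrable (fun δ => g δ • δ) (gaussPi n σ))
    (hint₂ : Integrable (fun δ => gradient g δ) (gaussPi n σ)) :
    ∫ δ, g δ • δ ∂(gaussPi n σ) = σ ^ 2 • ∫ δ, gradient g δ ∂(gaussPi n σ) := by
  ext i
  have h₁ : Integrable (fun δ => δ i * g δ) (gaussPi n σ) := by
    simpa [mul_comm] using (EuclideanSpace.proj (𝕜 := ℝ) i).integrable_comp hint₁
  have h₂ : Integrable (fun δ => fderiv ℝ g δ (EuclideanSpace.single i 1)) (gaussPi n σ) := by
    simpa [gradient_apply_eq_fderiv_single] using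
      (EuclideanSpace.proj (𝕜 := ℝ) i).integrable_comp hint₂
  rw [integral_euclideanSpace_apply hint₁, PiLp.smul_apply, integral_euclideanSpace_apply hint₂]
  simp only [PiLp.smul_apply, smul_eq_mul, mul_comm (g _), gradient_apply_eq_fderiv_single]
  exact integral_coord_mul_gaussPi (hg.differentiable one_ne_zero) i h₁ h₂

/-- **Multivariate Stein's identity.** For `g` continuously differentiable with
polynomial growth, `∫ δ g(δ) dμ_σ = σ² ∫ ∇g(δ) dμ_σ` where `μ_σ = N(0, σ² I)`. -/
theorem stein_identity_multivariate (n : ℕ) (σ : ℝ) (hσ : 0 < σ)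
    (g : EuclideanSpace ℝ (Fin n) → ℝ) (hg : ContDiff ℝ 1 g)
    (hint₁ : Integrable (fun δ => g δ • δ) (gaussPi n σ))
    (hint₂ : Integrable (fun δ => gradient g δ) (gaussPi n σ))
    (hgrowth : ∃ (C : ℝ) (k : ℕ), ∀ δ : EuclideanSpace ℝ (Fin n),
      |g δ| ≤ C * (1 + ‖δ‖) ^ k) :
    ∫ δ, g δ • δ ∂(gaussPi n σ) = σ ^ 2 • ∫ δ, gradient g δ ∂(gaussPi n σ) :=
  stein_identity_multivariate_general n σ g hg hint₁ hint₂
end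

section
/- Quantitative convergence of the smoothed gradient: let n ∈ ℕ, σ > 0, and let μ_σ be the product measure on EuclideanSpace ℝ (Fin n) each of whose coordinates is distributed as N(0, σ²). If L : EuclideanSpace ℝ (Fin n) → ℝ is continuously differentiable and its gradient ∇L is Lipschitz with constant M ≥ 0 (and bounded), then for every W, ‖∇L_σ(W) − ∇L(W)‖ ≤ M · σ · √n, where L_σ(W) := ∫ L(W + δ) dμ_σ(δ). In particular ∇L_σ(W) → ∇L(W) as σ → 0⁺. -/
/-!
Differentiating under the integral sign, `∇L_σ(W) = E[∇L(W + δ)]`; the derivative of `L` grows at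
most linearly because it is Lipschitz, which dominates the integrand against a law with a finite
second moment. Hence `‖∇L_σ(W) - ∇L(W)‖ ≤ E‖∇L(W + δ) - ∇L(W)‖ ≤ M E‖δ‖ ≤ M (E‖δ‖²)^{1/2}`, and
`E‖δ‖² = n σ²` coordinatewise.
-/

open MeasureTheory ProbabilityTheory

open scoped NNReal

section Smoothing

variable {E F : Type*} [NormedAddCommGroup E] [NormedSpace ℝ E]
  [NormedAddCommGroup F] [NormedSpace ℝ F] {f : E → F} {M : ℝ≥0}

lemma norm_sub_sub_fderiv_le_of_lipschitzWith_fderiv (hf : Differentiable ℝ f)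
    (hf' : LipschitzWith M (fderiv ℝ f)) (x y : E) :
    ‖f y - f x - fderiv ℝ f x (y - x)‖ ≤ M * ‖y - x‖ ^ 2 := by
  have hderiv : ∀ z ∈ Metric.closedBall x ‖y - x‖,
      ‖fderiv ℝ f z - fderiv ℝ f x‖ ≤ M * ‖y - x‖ := fun z hz => by
    rw [← dist_eq_norm]
    exact (hf'.dist_le_mul z x).trans (by gcongr; exact hz)
  calc _ ≤ M * ‖y - x‖ * ‖y - x‖ :=
        (convex_closedBall x _).norm_image_sub_le_of_norm_fderiv_le' (fun z _ => hf z) hderiv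
          (Metric.mem_closedBall_self (norm_nonneg _)) (by simp [dist_eq_norm])
    _ = M * ‖y - x‖ ^ 2 := by ring

variable [MeasurableSpace E] [BorelSpace E] [SecondCountableTopology E] {μ : Measure E}

lemma integrable_comp_add_of_lipschitzWith_fderiv [IsFiniteMeasure μ] (hμ : MemLp id 2 μ)
    (hf : Differentiable ℝ f) (hf' : LipschitzWith M (fderiv ℝ f)) (x : E) :
    Integrable (fun δ => f (x + δ)) μ := by
  have hδ : Integrable (fun δ : E => ‖δ‖) μ := (hμ.integrable one_le_two).norm
  have hδ2 : Integrable (fun δ : E => ‖δ‖ ^ 2) μ :=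
    (memLp_two_iff_integrable_sq_norm aestronglyMeasurable_id).1 hμ
  refine Integrable.mono' (((integrable_const ‖f x‖).add (hδ.const_mul ‖fderiv ℝ f x‖)).add
    (hδ2.const_mul M)) (hf.continuous.comp (continuous_const_add x)).aestronglyMeasurable
    (ae_of_all _ fun δ => ?_)
  have htaylor := norm_sub_sub_fderiv_le_of_lipschitzWith_fderiv hf hf' x (x + δ)
  rw [add_sub_cancel_left] at htaylor
  calc ‖f (x + δ)‖ = ‖f x + fderiv ℝ f x δ + (f (x + δ) - f x - fderiv ℝ f x δ)‖ := by
        congr 1; abel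
    _ ≤ ‖f x‖ + ‖fderiv ℝ f x δ‖ + ‖f (x + δ) - f x - fderiv ℝ f x δ‖ := norm_add₃_le
    _ ≤ ‖f x‖ + ‖fderiv ℝ f x‖ * ‖δ‖ + M * ‖δ‖ ^ 2 := by
        gcongr
        exact (fderiv ℝ f x).le_opNorm δ

lemma hasFDerivAt_integral_comp_add [IsFiniteMeasure μ] (hμ : MemLp id 2 μ)
    (hf : Differentiable ℝ f) (hf' : LipschitzWith M (fderiv ℝ f)) (x : E) :
    HasFDerivAt (fun y => ∫ δ, f (y + δ) ∂μ) (∫ δ, fderiv ℝ f (x + δ) ∂μ) x := by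
  have hδ : Integrable (fun δ : E => ‖δ‖) μ := (hμ.integrable one_le_two).norm
  refine hasFDerivAt_integral_of_dominated_of_fderiv_le (F' := fun y δ => fderiv ℝ f (y + δ))
    (bound := fun δ => ‖fderiv ℝ f x‖ + M * (1 + ‖δ‖)) (Metric.ball_mem_nhds x one_pos)
    (Filter.Eventually.of_forall fun y =>
      (hf.continuous.comp (continuous_const_add y)).aestronglyMeasurable)
    (integrable_comp_add_of_lipschitzWith_fderiv hμ hf hf' x)
    (hf'.continuous.comp (continuous_const_add x)).aestronglyMeasurable
    (ae_of_all _ fun δ y hy => ?_)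
    ((integrable_const _).add (((integrable_const 1).add hδ).const_mul M))
    (ae_of_all _ fun δ y _ => ?_)
  · refine norm_le_norm_add_const_of_dist_le ((hf'.dist_le_mul _ _).trans ?_)
    gcongr
    calc dist (y + δ) x ≤ dist y x + ‖δ‖ := by
          simpa [dist_eq_norm, add_sub_right_comm] using norm_add_le (y - x) δ
      _ ≤ 1 + ‖δ‖ := by gcongr; exact (Metric.mem_ball.1 hy).le
  · exact (hf (y + δ)).hasFDerivAt.comp (g := f) y ((hasFDerivAt_id y).add_const δ)

lemma norm_integral_fderiv_comp_add_sub_le [CompleteSpace F] [IsProbabilityMeasure μ]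
    (hμ : Integrable (fun δ => ‖δ‖) μ) (hf' : LipschitzWith M (fderiv ℝ f)) (x : E) :
    ‖∫ δ, fderiv ℝ f (x + δ) ∂μ - fderiv ℝ f x‖ ≤ M * ∫ δ, ‖δ‖ ∂μ := by
  have hint : Integrable (fun δ => fderiv ℝ f (x + δ)) μ :=
    Integrable.mono' ((integrable_const ‖fderiv ℝ f x‖).add (hμ.const_mul M))
      (hf'.continuous.comp (continuous_const_add x)).aestronglyMeasurable
      (ae_of_all _ fun δ => norm_le_norm_add_const_of_dist_le
        (by simpa using hf'.dist_le_mul (x + δ) x))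
  calc ‖∫ δ, fderiv ℝ f (x + δ) ∂μ - fderiv ℝ f x‖
      = ‖∫ δ, (fderiv ℝ f (x + δ) - fderiv ℝ f x) ∂μ‖ := by
        rw [integral_sub hint (integrable_const _), integral_const, probReal_univ, one_smul]
    _ ≤ ∫ δ, M * ‖δ‖ ∂μ := norm_integral_le_of_norm_le (hμ.const_mul M)
        (ae_of_all _ fun δ => by simpa [dist_eq_norm] using hf'.dist_le_mul (x + δ) x)
    _ = M * ∫ δ, ‖δ‖ ∂μ := integral_const_mul _ _

end Smoothing

section Moments

variable {Ω : Type*} [MeasurableSpace Ω] {μ : Measure Ω}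

lemma sq_integral_le_integral_sq [IsProbabilityMeasure μ] {X : Ω → ℝ} (hX : MemLp X 2 μ) :
    (∫ ω, X ω ∂μ) ^ 2 ≤ ∫ ω, X ω ^ 2 ∂μ := by
  have hvar := variance_nonneg X μ
  rw [variance_eq_sub hX] at hvar
  simpa only [Pi.pow_apply, sub_nonneg] using hvar

end Moments

section EuclideanProduct

variable {ι : Type*} [Fintype ι] {ν : ι → Measure ℝ} [∀ i, IsProbabilityMeasure (ν i)]

lemma integrable_norm_sq_map_toLp_pi (h : ∀ i, MemLp id 2 (ν i)) :
    Integrable (fun x : EuclideanSpace ℝ ι => ‖x‖ ^ 2)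
      ((Measure.pi ν).map (MeasurableEquiv.toLp 2 (ι → ℝ))) := by
  rw [integrable_map_equiv]
  simp only [Function.comp_def, EuclideanSpace.real_norm_sq_eq, MeasurableEquiv.toLp_apply]
  exact integrable_finsetSum _ fun i _ =>
    integrable_comp_eval (μ := ν) (f := fun t : ℝ => t ^ 2) (h i).integrable_sq

lemma integral_norm_sq_map_toLp_pi (h : ∀ i, MemLp id 2 (ν i)) :
    ∫ x, ‖x‖ ^ 2 ∂((Measure.pi ν).map (MeasurableEquiv.toLp 2 (ι → ℝ)))
      = ∑ i, ∫ t, t ^ 2 ∂ν i := by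
  rw [integral_map_equiv]
  simp only [EuclideanSpace.real_norm_sq_eq, MeasurableEquiv.toLp_apply]
  rw [integral_finsetSum _ fun i _ =>
    integrable_comp_eval (μ := ν) (f := fun t : ℝ => t ^ 2) (h i).integrable_sq]
  exact Finset.sum_congr rfl fun i _ =>
    integral_comp_eval (μ := ν) (f := fun t : ℝ => t ^ 2) (by fun_prop)

end EuclideanProduct

section GaussPi

lemma integral_sq_gaussianReal_zero (v : ℝ≥0) : ∫ x, x ^ 2 ∂gaussianReal 0 v = v := by
  rw [← variance_id_gaussianReal (μ := 0),
    variance_of_integral_eq_zero aemeasurable_id integral_id_gaussianReal]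
  rfl

variable {n : ℕ} {σ : ℝ}

-- The variance `⟨σ ^ 2, _⟩` in `gaussPi` elaborates as a bare subtype, not as `ℝ≥0`, which
-- hides the instances and lemmas about `gaussianReal`.
lemma gaussPi_eq_map_pi : gaussPi n σ = (Measure.pi fun _ : Fin n =>
    gaussianReal 0 (σ ^ 2).toNNReal).map (MeasurableEquiv.toLp 2 (Fin n → ℝ)) := by
  rw [Real.toNNReal_of_nonneg (sq_nonneg σ)]
  rfl

instance : IsProbabilityMeasure (gaussPi n σ) := by
  rw [gaussPi_eq_map_pi]
  exact Measure.isProbabilityMeasure_map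
    (MeasurableEquiv.toLp 2 (Fin n → ℝ)).measurable.aemeasurable

lemma memLp_two_id_gaussPi : MemLp id 2 (gaussPi n σ) := by
  rw [gaussPi_eq_map_pi, memLp_two_iff_integrable_sq_norm aestronglyMeasurable_id]
  exact integrable_norm_sq_map_toLp_pi fun _ => memLp_id_gaussianReal 2

lemma integral_norm_sq_gaussPi : ∫ δ, ‖δ‖ ^ 2 ∂gaussPi n σ = n * σ ^ 2 := by
  rw [gaussPi_eq_map_pi, integral_norm_sq_map_toLp_pi fun _ => memLp_id_gaussianReal 2]
  simp [integral_sq_gaussianReal_zero, sq_nonneg]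

lemma integral_norm_gaussPi_le (hσ : 0 ≤ σ) : ∫ δ, ‖δ‖ ∂gaussPi n σ ≤ σ * √n := by
  have h := sq_integral_le_integral_sq (memLp_two_id_gaussPi (n := n) (σ := σ)).norm
  simp only [id, integral_norm_sq_gaussPi] at h
  calc _ ≤ √(n * σ ^ 2) := Real.le_sqrt_of_sq_le h
    _ = σ * √n := by rw [Real.sqrt_mul (Nat.cast_nonneg n), Real.sqrt_sq hσ, mul_comm]

end GaussPi

theorem smoothed_gradient_error_bound_general (n : ℕ) (σ : ℝ) (hσ : 0 < σ)
    (L : EuclideanSpace ℝ (Fin n) → ℝ) (hL : ContDiff ℝ 1 L)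
    (M : NNReal) (hlip : LipschitzWith M (fun x => gradient L x)) :
    ∀ W : EuclideanSpace ℝ (Fin n),
      ‖gradient (fun W' => ∫ δ, L (W' + δ) ∂(gaussPi n σ)) W - gradient L W‖
        ≤ M * σ * Real.sqrt n := by
  intro W
  have hfderiv_eq : fderiv ℝ L = InnerProductSpace.toDual ℝ _ ∘ gradient L :=
    funext fun x => ((InnerProductSpace.toDual ℝ _).apply_symm_apply _).symm
  have hfderiv : LipschitzWith M (fderiv ℝ L) := by
    rw [hfderiv_eq, ← one_mul M]
    exact (InnerProductSpace.toDual ℝ _).lipschitz.comp hlip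
  rw [gradient, gradient, (hasFDerivAt_integral_comp_add memLp_two_id_gaussPi
    (hL.differentiable one_ne_zero) hfderiv W).fderiv, ← map_sub, LinearIsometryEquiv.norm_map]
  calc _ ≤ M * ∫ δ, ‖δ‖ ∂gaussPi n σ := norm_integral_fderiv_comp_add_sub_le
        (memLp_two_id_gaussPi.integrable one_le_two).norm hfderiv W
    _ ≤ M * (σ * √n) := by gcongr; exact integral_norm_gaussPi_le hσ.le
    _ = M * σ * √n := by ring

/-- **Quantitative convergence of the smoothed gradient.** If `L` is continuously
differentiable with `M`-Lipschitz (and bounded) gradient, then for every `W`,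
`‖∇L_σ(W) − ∇L(W)‖ ≤ M σ √n`, where `L_σ(W) := ∫ L(W + δ) dμ_σ(δ)`. -/
theorem smoothed_gradient_error_bound (n : ℕ) (σ : ℝ) (hσ : 0 < σ)
    (L : EuclideanSpace ℝ (Fin n) → ℝ) (hL : ContDiff ℝ 1 L)
    (M : NNReal) (hlip : LipschitzWith M (fun x => gradient L x))
    (hbound : ∃ B : ℝ, ∀ x, ‖gradient L x‖ ≤ B) :
    ∀ W : EuclideanSpace ℝ (Fin n),
      ‖gradient (fun W' => ∫ δ, L (W' + δ) ∂(gaussPi n σ)) W - gradient L W‖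
        ≤ M * σ * Real.sqrt n :=
  smoothed_gradient_error_bound_general n σ hσ L hL M hlip
end

section
/- Deterministic error bound combining Theorem 1 with operator-norm control: let n, K ∈ ℕ with K ≥ 1, σ > 0, W ∈ EuclideanSpace ℝ (Fin n), and let L : EuclideanSpace ℝ (Fin n) → ℝ be differentiable at W. Suppose δ₁, …, δ_K ∈ EuclideanSpace ℝ (Fin n) satisfy the exact central-difference scheme L(W + δ_k) − L(W − δ_k) = 2 · ⟪δ_k, ∇L(W)⟫ for every k. With Ĝ := (1/K) · Σ_{k=1}^{K} (δ_k / (2σ²)) · (L(W + δ_k) − L(W − δ_k)) and Σ̂ := (1/(Kσ²)) · Σ_{k=1}^{K} δ_k δ_kᵀ, one has ‖Ĝ − ∇L(W)‖ ≤ ‖Σ̂ − I‖₂ · ‖∇L(W)‖, where ‖Σ̂ − I‖₂ is the operator norm (spectral norm) of the matrix Σ̂ − I and ‖·‖ the Euclidean norm. -/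
/-! Under the exact central-difference scheme the estimator is `Ĝ = Σ̂ ∇L(W)`, so
`Ĝ − ∇L(W) = (Σ̂ − I) ∇L(W)` and the bound is `‖A x‖ ≤ ‖A‖ ‖x‖`. -/

open MeasureTheory RealInnerProductSpace

theorem sum_innerSL_smulRight_apply {E ι : Type*} [NormedAddCommGroup E]
    [InnerProductSpace ℝ E] (s : Finset ι) (δ : ι → E) (x : E) :
    (∑ k ∈ s, (innerSL ℝ (δ k)).smulRight (δ k)) x = ∑ k ∈ s, ⟪δ k, x⟫ • δ k := by
  simp only [sum_apply, ContinuousLinearMap.smulRight_apply, innerSL_apply_apply]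

theorem baffle_estimator_error_bound_general (n K : ℕ) (σ : ℝ)
    (W : EuclideanSpace ℝ (Fin n)) (L : EuclideanSpace ℝ (Fin n) → ℝ)
    (δ : Fin K → EuclideanSpace ℝ (Fin n))
    (hcentral : ∀ k : Fin K,
      L (W + δ k) - L (W - δ k) = 2 * ⟪δ k, gradient L W⟫) :
    ‖((K : ℝ)⁻¹ • ∑ k : Fin K, ((L (W + δ k) - L (W - δ k)) / (2 * σ ^ 2)) • δ k)
        - gradient L W‖
      ≤ ‖(((K : ℝ) * σ ^ 2)⁻¹ • ∑ k : Fin K, (innerSL ℝ (δ k)).smulRight (δ k))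
          - ContinuousLinearMap.id ℝ (EuclideanSpace ℝ (Fin n))‖
        * ‖gradient L W‖ := by
  set g := gradient L W
  set S := ((K : ℝ) * σ ^ 2)⁻¹ • ∑ k : Fin K, (innerSL ℝ (δ k)).smulRight (δ k)
  have estimator_eq :
      (K : ℝ)⁻¹ • ∑ k : Fin K, ((L (W + δ k) - L (W - δ k)) / (2 * σ ^ 2)) • δ k
        = S g := by
    simp_rw [S, hcentral, mul_div_mul_left _ _ (two_ne_zero' ℝ), smul_apply,
      sum_innerSL_smulRight_apply, mul_inv, mul_smul, Finset.smul_sum, smul_smul, div_eq_inv_mul]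
  calc _ = ‖(S - ContinuousLinearMap.id ℝ (EuclideanSpace ℝ (Fin n))) g‖ := by
        rw [estimator_eq, sub_apply, ContinuousLinearMap.id_apply]
    _ ≤ _ := ContinuousLinearMap.le_opNorm _ _

/-- **Deterministic error bound for the BAFFLE estimator.** Under the exact
central-difference scheme, the estimator `Ĝ` satisfies
`‖Ĝ − ∇L(W)‖ ≤ ‖Σ̂ − I‖₂ ‖∇L(W)‖`, where `Σ̂ := (1/(Kσ²)) Σ_k δ_k δ_kᵀ` and `‖·‖₂`
is the operator norm of the induced linear map on `EuclideanSpace ℝ (Fin n)`. -/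
theorem baffle_estimator_error_bound (n K : ℕ) (hK : 1 ≤ K) (σ : ℝ) (hσ : 0 < σ)
    (W : EuclideanSpace ℝ (Fin n)) (L : EuclideanSpace ℝ (Fin n) → ℝ)
    (hL : DifferentiableAt ℝ L W)
    (δ : Fin K → EuclideanSpace ℝ (Fin n))
    (hcentral : ∀ k : Fin K,
      L (W + δ k) - L (W - δ k) = 2 * ⟪δ k, gradient L W⟫) :
    ‖((K : ℝ)⁻¹ • ∑ k : Fin K, ((L (W + δ k) - L (W - δ k)) / (2 * σ ^ 2)) • δ k)
        - gradient L W‖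
      ≤ ‖(((K : ℝ) * σ ^ 2)⁻¹ • ∑ k : Fin K, (innerSL ℝ (δ k)).smulRight (δ k))
          - ContinuousLinearMap.id ℝ (EuclideanSpace ℝ (Fin n))‖
        * ‖gradient L W‖ :=
  baffle_estimator_error_bound_general n K σ W L δ hcentral
end
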